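/- Let f₁ and f₂ be real numbers with 0 < f₂ < f₁, and set φ̄ = arctan f₁ and k̄ = √(1 − f₂²/f₁²). Then ∫_{f₂}^{f₁} arctan q / √((f₁² − q²)(q² − f₂²)) dq = (π/2) · F(φ̄, k̄) / f₁. -/

import Mathlib

open Real intervalIntegral

/-- Incomplete elliptic integral of the first kind `F(φ, k)`. -/
noncomputable def ellipticF (φ k : ℝ) : ℝ :=
  ∫ θ in (0:ℝ)..φ, (1 - k ^ 2 * Real.sin θ ^ 2) ^ (-(1:ℝ)/2)

/-- Incomplete elliptic integral of the second kind `E(φ, k)`. -/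
noncomputable def ellipticE (φ k : ℝ) : ℝ :=
  ∫ θ in (0:ℝ)..φ, (1 - k ^ 2 * Real.sin θ ^ 2) ^ ((1:ℝ)/2)

/-- Complete elliptic integral of the first kind `K(k)`. -/
noncomputable def completeK (k : ℝ) : ℝ := ellipticF (Real.pi / 2) k

/-- Complete elliptic integral of the second kind `E(k)`. -/
noncomputable def completeE (k : ℝ) : ℝ := ellipticE (Real.pi / 2) k

/-- Inverse hyperbolic tangent. -/
noncomputable def arctanh (x : ℝ) : ℝ := Real.log ((1 + x) / (1 - x)) / 2

open MeasureTheory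


lemma Dpos (r s c : ℝ) (hr : 0 < r) (h : s^2 + c^2 = 1) : 0 < c^2 + r*s^2 := by
  have h1 := mul_le_mul_of_nonneg_right (min_le_right 1 r) (sq_nonneg s)
  have h2 := mul_le_mul_of_nonneg_right (min_le_left 1 r) (sq_nonneg c)
  have h3 : (0:ℝ) < min 1 r := lt_min one_pos hr
  nlinarith
lemma antider (r : ℝ) (hr : 0 < r) (θ : ℝ) :
    HasDerivAt (fun θ => θ + arctan ((r-1)*Real.sin θ*Real.cos θ/(Real.cos θ^2 + r*Real.sin θ^2)))
      (r / (1 + (r^2-1)*Real.sin θ^2)) θ := by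
  have hD : 0 < Real.cos θ^2 + r*Real.sin θ^2 := Dpos r _ _ hr (sin_sq_add_cos_sq θ)
  have hD2 : 0 < 1 + (r^2-1)*Real.sin θ^2 := by
    have := Dpos (r^2) (Real.sin θ) (Real.cos θ) (by positivity) (sin_sq_add_cos_sq θ)
    nlinarith [sin_sq_add_cos_sq θ]
  have hnum : HasDerivAt (fun θ => (r-1)*Real.sin θ*Real.cos θ)
      ((r-1)*(Real.cos θ^2 - Real.sin θ^2)) θ := by
    have := ((Real.hasDerivAt_sin θ).const_mul (r-1)).mul (Real.hasDerivAt_cos θ)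
    exact this.congr_deriv (by ring)
  have hden : HasDerivAt (fun θ => Real.cos θ^2 + r*Real.sin θ^2)
      (2*(r-1)*Real.sin θ*Real.cos θ) θ := by
    have h1 := ((Real.hasDerivAt_cos θ).pow 2)
    have h2 := ((Real.hasDerivAt_sin θ).pow 2).const_mul r
    exact (h1.add h2).congr_deriv (by ring)
  have hu : HasDerivAt (fun θ => (r-1)*Real.sin θ*Real.cos θ/(Real.cos θ^2 + r*Real.sin θ^2))
      (((r-1)*(Real.cos θ^2 - Real.sin θ^2)*(Real.cos θ^2 + r*Real.sin θ^2)
        - (r-1)*Real.sin θ*Real.cos θ*(2*(r-1)*Real.sin θ*Real.cos θ))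
        /(Real.cos θ^2 + r*Real.sin θ^2)^2) θ := hnum.div hden hD.ne'
  have := (hasDerivAt_id θ).add hu.arctan
  refine this.congr_deriv ?_
  symm
  have hpyth := sin_sq_add_cos_sq θ
  set s := Real.sin θ; set c := Real.cos θ
  have hc2 : c^2 = 1 - s^2 := by linarith
  have h4 : c^4 = (1-s^2)^2 := by rw [show c^4 = (c^2)^2 by ring, hc2]
  have h6 : c^6 = (1-s^2)^3 := by rw [show c^6 = (c^2)^3 by ring, hc2]
  have h8 : c^8 = (1-s^2)^4 := by rw [show c^8 = (c^2)^4 by ring, hc2]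
  have hne : (1 + ((r - 1) * s * c / (c ^ 2 + r * s ^ 2)) ^ 2) ≠ 0 := by positivity
  field_simp
  ring_nf
  simp only [hc2, h4, h6, h8]
  ring

lemma int_r (r : ℝ) (hr : 0 < r) :
    ∫ θ in (0:ℝ)..(π/2), r / (1 + (r^2-1)*Real.sin θ^2) = π/2 := by
  have hcont : Continuous fun θ : ℝ => r / (1 + (r^2-1)*Real.sin θ^2) := by
    apply Continuous.div continuous_const
    · fun_prop
    · intro θ
      have hD2 : 0 < 1 + (r^2-1)*Real.sin θ^2 := by
        have := Dpos (r^2) (Real.sin θ) (Real.cos θ) (by positivity) (sin_sq_add_cos_sq θ)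
        nlinarith [sin_sq_add_cos_sq θ]
      exact hD2.ne'
  rw [integral_eq_sub_of_hasDerivAt (fun θ _ => antider r hr θ) (hcont.intervalIntegrable _ _)]
  simp [Real.cos_pi_div_two, Real.sin_pi_div_two]

lemma key1 (p q : ℝ) (hp : 0 < p) (hq : 0 ≤ q) :
    ∫ θ in (0:ℝ)..(π/2), 1/(p + q * Real.sin θ^2) = π/(2 * Real.sqrt (p*(p+q))) := by
  set r := Real.sqrt ((p+q)/p) with hrdef
  have hpq : 0 < p + q := by linarith
  have hr : 0 < r := Real.sqrt_pos.2 (by positivity)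
  have hr2 : r^2 = (p+q)/p := Real.sq_sqrt (by positivity)
  have hrs : p * r = Real.sqrt (p*(p+q)) := by
    rw [hrdef, ← Real.sqrt_sq hp.le, ← Real.sqrt_mul (sq_nonneg p)]
    congr 1; field_simp; rw [Real.sq_sqrt (sq_nonneg p)]
  have heq : ∀ θ : ℝ, 1/(p + q * Real.sin θ^2)
      = (1/(p*r)) * (r / (1 + (r^2-1)*Real.sin θ^2)) := by
    intro θ
    rw [hr2]
    have h1 : 1 + ((p+q)/p - 1) * Real.sin θ^2 = (p + q * Real.sin θ^2)/p := by
      field_simp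
      ring
    rw [h1]
    rw [div_div_eq_mul_div]
    have h2 : 0 < p + q * Real.sin θ^2 := by positivity
    field_simp
    try ring
  simp_rw [heq]
  rw [intervalIntegral.integral_const_mul, int_r r hr, hrs.symm]
  rw [one_div, inv_mul_eq_div, div_div]

lemma key2 (x : ℝ) (hx : 0 < x) :
    Real.arctan x / x = ∫ t in (0:ℝ)..1, 1/(1 + x^2 * t^2) := by
  have hder : ∀ t ∈ Set.uIcc (0:ℝ) 1, HasDerivAt (fun t => Real.arctan (x*t) / x)
      (1/(1 + x^2*t^2)) t := by
    intro t _
    have h1 : HasDerivAt (fun t : ℝ => x*t) x t := by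
      simpa using (hasDerivAt_id t).const_mul x
    have := h1.arctan
    have h2 := this.div_const x
    exact h2.congr_deriv (by rw [mul_pow]; field_simp)
  have hcont : Continuous fun t : ℝ => 1/(1 + x^2*t^2) := by
    apply Continuous.div continuous_const (by fun_prop)
    intro t; positivity
  rw [integral_eq_sub_of_hasDerivAt hder (hcont.intervalIntegrable _ _)]
  simp

-- elliptic side: ellipticF (arctan a) (sqrt (1 - b^2/a^2)) = a * ∫_0^1 1/sqrt((1+a²t²)(1+b²t²))
lemma keyF (a b : ℝ) (hb : 0 < b) (hab : b < a) :
    ellipticF (Real.arctan a) (Real.sqrt (1 - b^2/a^2))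
      = ∫ t in (0:ℝ)..1, a / Real.sqrt ((1+a^2*t^2)*(1+b^2*t^2)) := by
  have ha : 0 < a := hb.trans hab
  have hk2 : (Real.sqrt (1 - b^2/a^2))^2 = 1 - b^2/a^2 := by
    rw [Real.sq_sqrt]
    have : b^2/a^2 ≤ 1 := by
      rw [div_le_one (by positivity)]
      nlinarith
    linarith
  set k := Real.sqrt (1 - b^2/a^2)
  have hfg : ∀ t ∈ Set.uIcc (0:ℝ) 1, HasDerivAt (fun t => Real.arctan (a*t))
      (a/(1+a^2*t^2)) t := by
    intro t _
    have h1 : HasDerivAt (fun t : ℝ => a*t) a t := by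
      simpa using (hasDerivAt_id t).const_mul a
    have := h1.arctan
    convert this using 1
    rw [mul_pow]; field_simp
  have hcont' : ContinuousOn (fun t : ℝ => a/(1+a^2*t^2)) (Set.uIcc (0:ℝ) 1) := by
    apply Continuous.continuousOn
    apply Continuous.div continuous_const (by fun_prop)
    intro t; positivity
  have hgpos : ∀ θ : ℝ, 0 < 1 - k^2 * Real.sin θ^2 := by
    intro θ
    have h1 : Real.sin θ^2 ≤ 1 := Real.sin_sq_le_one θ
    have h2 : 0 ≤ k^2 := sq_nonneg k
    have h3 : k^2 * Real.sin θ^2 ≤ k^2 * 1 := by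
      apply mul_le_mul_of_nonneg_left h1 h2
    rw [hk2] at h3 ⊢
    have : 0 < b^2/a^2 := by positivity
    nlinarith
  have hgc : Continuous fun θ : ℝ => (1 - k^2 * Real.sin θ^2) ^ (-(1:ℝ)/2) := by
    apply Continuous.rpow_const (by fun_prop)
    intro θ; exact Or.inl (hgpos θ).ne'
  have := integral_comp_smul_deriv hfg hcont' hgc
  have e1 : Real.arctan (a*1) = Real.arctan a := by norm_num
  have e0 : Real.arctan (a*0) = 0 := by simp
  rw [e0, e1] at this
  rw [ellipticF, ← this]
  apply intervalIntegral.integral_congr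
  intro t _
  have h1t : (0:ℝ) < 1 + a^2*t^2 := by positivity
  have h2t : (0:ℝ) < 1 + b^2*t^2 := by positivity
  have hsin : Real.sin (Real.arctan (a*t))^2 = (a*t)^2/(1+(a*t)^2) := by
    rw [Real.sin_arctan]
    rw [div_pow, Real.sq_sqrt (by positivity)]
  have hval : 1 - k^2 * Real.sin (Real.arctan (a*t))^2 = (1+b^2*t^2)/(1+a^2*t^2) := by
    rw [hsin, hk2]
    field_simp
    ring
  simp only [smul_eq_mul, Function.comp]
  rw [hval]
  have hrp : ((1+b^2*t^2)/(1+a^2*t^2) : ℝ) ^ (-(1:ℝ)/2)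
      = Real.sqrt (1+a^2*t^2) / Real.sqrt (1+b^2*t^2) := by
    rw [show (-(1:ℝ)/2) = -(1/2:ℝ) by norm_num,
        Real.rpow_neg (by positivity), ← Real.sqrt_eq_rpow,
        Real.sqrt_div (by positivity : (0:ℝ) ≤ 1+b^2*t^2)]
    rw [inv_div]
  rw [hrp, Real.sqrt_mul (by positivity)]
  have hsA : Real.sqrt (1+a^2*t^2) * Real.sqrt (1+a^2*t^2) = 1+a^2*t^2 :=
    Real.mul_self_sqrt (by positivity)
  have hA0 : Real.sqrt (1+a^2*t^2) ≠ 0 := by positivity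
  have hB0 : Real.sqrt (1+b^2*t^2) ≠ 0 := by positivity
  field_simp
  linear_combination hsA

lemma cov (a b : ℝ) (hb : 0 < b) (hab : b < a) :
    (∫ q in b..a, Real.arctan q / Real.sqrt ((a^2 - q^2) * (q^2 - b^2)))
      = ∫ θ in (0:ℝ)..(π/2), Real.arctan (Real.sqrt (b^2 + (a^2-b^2)*Real.sin θ^2))
          / Real.sqrt (b^2 + (a^2-b^2)*Real.sin θ^2) := by
  have ha : 0 < a := hb.trans hab
  set h : ℝ → ℝ := fun θ => b^2 + (a^2-b^2)*Real.sin θ^2 with hh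
  set g : ℝ → ℝ := fun θ => Real.sqrt (h θ) with hg
  have hab2 : 0 < a^2 - b^2 := by nlinarith
  have hhpos : ∀ θ, 0 < h θ := by intro θ; have := sq_nonneg (Real.sin θ); positivity
  have hgpos : ∀ θ, 0 < g θ := fun θ => Real.sqrt_pos.2 (hhpos θ)
  have hgsq : ∀ θ, g θ^2 = h θ := fun θ => Real.sq_sqrt (hhpos θ).le
  have hgc : Continuous g := by
    apply Real.continuous_sqrt.comp; fun_prop
  have hg0 : g 0 = b := by simp [hg, hh, Real.sqrt_sq hb.le]
  have hgpi : g (π/2) = a := by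
    simp only [hg, hh, Real.sin_pi_div_two]
    rw [show b^2 + (a^2-b^2)*1^2 = a^2 by ring, Real.sqrt_sq ha.le]
  have hmono : StrictMonoOn g (Set.Icc 0 (π/2)) := by
    intro θ₁ h₁ θ₂ h₂ hlt
    have hπ : (0:ℝ) < π := Real.pi_pos
    apply Real.sqrt_lt_sqrt (hhpos θ₁).le
    have hs₁ : 0 ≤ Real.sin θ₁ := Real.sin_nonneg_of_nonneg_of_le_pi h₁.1 (by
      have := h₁.2; have := Real.pi_pos; linarith)
    have hsm : Real.sin θ₁ < Real.sin θ₂ := by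
      apply Real.strictMonoOn_sin ⟨by linarith [h₁.1], by linarith [h₁.2]⟩
        ⟨by linarith [h₂.1], h₂.2⟩ hlt
    have : Real.sin θ₁^2 < Real.sin θ₂^2 := by nlinarith
    simp only [hh]; nlinarith
  have hderiv : ∀ θ ∈ Set.Ioo (0:ℝ) (π/2),
      HasDerivWithinAt g ((a^2-b^2)*Real.sin θ*Real.cos θ/(g θ)) (Set.Ioo (0:ℝ) (π/2)) θ := by
    intro θ _
    have hdh : HasDerivAt h ((a^2-b^2)*(2*Real.sin θ*Real.cos θ)) θ := by
      have := (((Real.hasDerivAt_sin θ).pow 2).const_mul (a^2-b^2)).const_add (b^2)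
      exact this.congr_deriv (by ring)
    have := (Real.hasDerivAt_sqrt (hhpos θ).ne').comp θ hdh
    have h2 : (a^2-b^2)*(2*Real.sin θ*Real.cos θ) / (2 * Real.sqrt (h θ))
        = (a^2-b^2)*Real.sin θ*Real.cos θ/(g θ) := by
      rw [hg]; field_simp
    rw [← h2]
    exact (this.congr_deriv (by ring)).hasDerivWithinAt
  have himg : g '' Set.Ioo 0 (π/2) = Set.Ioo b a := by
    apply Set.Subset.antisymm
    · rintro x ⟨θ, hθ, rfl⟩
      constructor
      · rw [← hg0]; exact hmono ⟨le_refl 0, le_of_lt Real.pi_div_two_pos⟩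
          ⟨hθ.1.le, hθ.2.le⟩ hθ.1
      · rw [← hgpi]; exact hmono ⟨hθ.1.le, hθ.2.le⟩
          ⟨Real.pi_div_two_pos.le, le_refl _⟩ hθ.2
    · have := intermediate_value_Ioo (le_of_lt Real.pi_div_two_pos) hgc.continuousOn
      rw [hg0, hgpi] at this
      exact this
  have hinj : Set.InjOn g (Set.Ioo 0 (π/2)) :=
    (hmono.injOn).mono Set.Ioo_subset_Icc_self
  have hcov := integral_image_eq_integral_abs_deriv_smul measurableSet_Ioo hderiv hinj
    (fun q => Real.arctan q / Real.sqrt ((a^2 - q^2) * (q^2 - b^2)))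
  rw [himg] at hcov
  rw [intervalIntegral.integral_of_le hab.le, intervalIntegral.integral_of_le
    (le_of_lt Real.pi_div_two_pos), MeasureTheory.integral_Ioc_eq_integral_Ioo,
    MeasureTheory.integral_Ioc_eq_integral_Ioo, hcov]
  apply MeasureTheory.setIntegral_congr_fun measurableSet_Ioo
  intro θ hθ
  have hπ : (0:ℝ) < π := Real.pi_pos
  have hsθ : 0 < Real.sin θ := Real.sin_pos_of_pos_of_lt_pi hθ.1 (by
    have := hθ.2; have := Real.pi_pos; linarith)
  have hcθ : 0 < Real.cos θ := Real.cos_pos_of_mem_Ioo ⟨by linarith [hθ.1], hθ.2⟩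
  have hfact : (a^2 - (g θ)^2) * ((g θ)^2 - b^2)
      = ((a^2-b^2)*Real.sin θ*Real.cos θ)^2 := by
    rw [hgsq]
    have := Real.sin_sq_add_cos_sq θ
    simp only [hh]
    linear_combination (-(a^2-b^2)^2 * Real.sin θ^2) * (Real.sin_sq_add_cos_sq θ)
  have hsqrt : Real.sqrt ((a^2 - (g θ)^2) * ((g θ)^2 - b^2))
      = (a^2-b^2)*Real.sin θ*Real.cos θ := by
    rw [hfact, Real.sqrt_sq (by positivity)]
  have habs : |(a^2-b^2)*Real.sin θ*Real.cos θ/(g θ)|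
      = (a^2-b^2)*Real.sin θ*Real.cos θ/(g θ) := by
    apply abs_of_pos; have := hgpos θ; positivity
  simp only [smul_eq_mul, habs, hsqrt]
  have hgp := hgpos θ
  have hsc : (0:ℝ) < (a^2-b^2)*Real.sin θ*Real.cos θ := by positivity
  field_simp
  ring

lemma fub (a b : ℝ) (hb : 0 < b) (hab : b < a) :
    (∫ θ in (0:ℝ)..(π/2), Real.arctan (Real.sqrt (b^2 + (a^2-b^2)*Real.sin θ^2))
        / Real.sqrt (b^2 + (a^2-b^2)*Real.sin θ^2))
      = ∫ t in (0:ℝ)..1, π/(2 * Real.sqrt ((1+b^2*t^2)*(1+a^2*t^2))) := by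
  have ha : 0 < a := hb.trans hab
  have hab2 : 0 < a^2 - b^2 := by nlinarith
  set h : ℝ → ℝ := fun θ => b^2 + (a^2-b^2)*Real.sin θ^2 with hh
  have hhpos : ∀ θ, 0 < h θ := by intro θ; have := sq_nonneg (Real.sin θ); positivity
  set g : ℝ → ℝ := fun θ => Real.sqrt (h θ) with hg
  have hgpos : ∀ θ, 0 < g θ := fun θ => Real.sqrt_pos.2 (hhpos θ)
  have hgsq : ∀ θ, g θ^2 = h θ := fun θ => Real.sq_sqrt (hhpos θ).le
  have hgc : Continuous g := Real.continuous_sqrt.comp (by fun_prop)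
  -- step 1: replace integrand with inner integral
  have step1 : ∀ θ : ℝ, Real.arctan (g θ) / g θ = ∫ t in (0:ℝ)..1, 1/(1 + (g θ)^2 * t^2) :=
    fun θ => key2 (g θ) (hgpos θ)
  show (∫ θ in (0:ℝ)..(π/2), Real.arctan (g θ) / g θ) = _
  rw [intervalIntegral.integral_congr (g := fun θ =>
      ∫ t in (0:ℝ)..1, 1/(1 + (g θ)^2 * t^2)) (fun θ _ => step1 θ)]
  -- step 2: Fubini
  have hFc : Continuous (Function.uncurry fun (θ t : ℝ) => 1/(1 + (g θ)^2 * t^2)) := by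
    apply Continuous.div continuous_const
    · fun_prop
    · rintro ⟨θ, t⟩
      have := hgpos θ
      have : (0:ℝ) < 1 + (g θ)^2 * t^2 := by positivity
      exact this.ne'
  have hInt : Integrable (Function.uncurry fun (θ t : ℝ) => 1/(1 + (g θ)^2 * t^2))
      ((volume.restrict (Set.Ioc (0:ℝ) (π/2))).prod (volume.restrict (Set.Ioc (0:ℝ) 1))) := by
    rw [Measure.prod_restrict]
    apply MeasureTheory.IntegrableOn.mono_set
      (hFc.continuousOn.integrableOn_compact (isCompact_Icc.prod isCompact_Icc))
    exact Set.prod_mono Set.Ioc_subset_Icc_self Set.Ioc_subset_Icc_self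
  have hswap := MeasureTheory.integral_integral_swap hInt
  have hπ2 : (0:ℝ) ≤ π/2 := Real.pi_div_two_pos.le
  calc ∫ θ in (0:ℝ)..(π/2), ∫ t in (0:ℝ)..1, 1/(1 + (g θ)^2 * t^2)
      = ∫ θ in Set.Ioc (0:ℝ) (π/2), ∫ t in Set.Ioc (0:ℝ) 1, 1/(1 + (g θ)^2 * t^2) := by
        rw [intervalIntegral.integral_of_le hπ2]
        congr 1; funext θ
        rw [intervalIntegral.integral_of_le zero_le_one]
    _ = ∫ t in Set.Ioc (0:ℝ) 1, ∫ θ in Set.Ioc (0:ℝ) (π/2), 1/(1 + (g θ)^2 * t^2) := hswap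
    _ = ∫ t in (0:ℝ)..1, π/(2 * Real.sqrt ((1+b^2*t^2)*(1+a^2*t^2))) := by
        rw [intervalIntegral.integral_of_le zero_le_one]
        apply MeasureTheory.setIntegral_congr_fun measurableSet_Ioc
        intro t _
        have e1 : ∀ θ : ℝ, 1/(1 + (g θ)^2 * t^2)
            = 1/((1+b^2*t^2) + (t^2*(a^2-b^2)) * Real.sin θ^2) := by
          intro θ; rw [hgsq]; simp only [hh]; ring_nf
        show (∫ θ in Set.Ioc (0:ℝ) (π/2), 1/(1 + (g θ)^2 * t^2))
            = π/(2 * Real.sqrt ((1+b^2*t^2)*(1+a^2*t^2)))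
        have := key1 (1+b^2*t^2) (t^2*(a^2-b^2)) (by positivity) (by positivity)
        rw [show (∫ θ in Set.Ioc (0:ℝ) (π/2), 1/(1 + (g θ)^2 * t^2))
            = ∫ θ in (0:ℝ)..(π/2), 1/(1 + (g θ)^2 * t^2) by
          rw [intervalIntegral.integral_of_le hπ2]]
        rw [intervalIntegral.integral_congr (fun θ _ => e1 θ), this]
        congr 2
        ring


theorem stmt_11 (f₁ f₂ : ℝ) (h0 : 0 < f₂) (h21 : f₂ < f₁)
    (φb kb : ℝ) (hφb : φb = Real.arctan f₁)
    (hkb : kb = Real.sqrt (1 - f₂ ^ 2 / f₁ ^ 2)) :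
    (∫ q in f₂..f₁,
        Real.arctan q / Real.sqrt ((f₁ ^ 2 - q ^ 2) * (q ^ 2 - f₂ ^ 2)))
      = Real.pi / 2 * ellipticF φb kb / f₁ := by
  have ha : 0 < f₁ := h0.trans h21
  rw [hφb, hkb]
  rw [cov f₁ f₂ h0 h21, fub f₁ f₂ h0 h21, keyF f₁ f₂ h0 h21]
  have e1 : ∀ t : ℝ, π/(2 * Real.sqrt ((1+f₂^2*t^2)*(1+f₁^2*t^2)))
      = (π/2) * (1 / Real.sqrt ((1+f₁^2*t^2)*(1+f₂^2*t^2))) := by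
    intro t
    rw [mul_comm (1+f₂^2*t^2)]
    ring
  have e2 : ∀ t : ℝ, f₁ / Real.sqrt ((1+f₁^2*t^2)*(1+f₂^2*t^2))
      = f₁ * (1 / Real.sqrt ((1+f₁^2*t^2)*(1+f₂^2*t^2))) := by
    intro t; ring
  rw [intervalIntegral.integral_congr (g := fun t =>
      (π/2) * (1 / Real.sqrt ((1+f₁^2*t^2)*(1+f₂^2*t^2)))) (fun t _ => e1 t),
    intervalIntegral.integral_congr (g := fun t =>
      f₁ * (1 / Real.sqrt ((1+f₁^2*t^2)*(1+f₂^2*t^2)))) (fun t _ => e2 t),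
    intervalIntegral.integral_const_mul, intervalIntegral.integral_const_mul]
  field_simp
  ring
  congr 1; funext x; ring_nf
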